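/- With F, G, τ, δ, β as in the construction and assuming 0 < G(τ) < 1, one has β < 1 < δ, hence δ − β > 0, D = F − G ≥ 0 on ℝ, and τ is a maximizing point of D with D(τ) = (δ − β)·G(τ)·(1 − G(τ)) > 0. -/
import Mathlib


open Filter Topology

theorem vincze_stmt2
    (G F : ℝ → ℝ) (τ δ β : ℝ)
    (hGmono : Monotone G) (hGcont : Continuous G)
    (hGrange : ∀ x, 0 ≤ G x ∧ G x ≤ 1)
    (hGbot : Tendsto G atBot (𝓝 0)) (hGtop : Tendsto G atTop (𝓝 1))
    (hδ : 1 < δ) (hGτpos : 0 < G τ) (hGτlt : G τ < 1)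
    (hδτ : δ * G τ < 1) (hβ : 0 < β)
    (hsum : δ * G τ + β * (1 - G τ) = 1)
    (hF1 : ∀ x, x ≤ τ → F x = δ * G x)
    (hF2 : ∀ x, τ < x → F x = β * (G x - G τ) + δ * G τ) :
    β < 1 ∧ 0 < δ - β ∧
    (∀ x, 0 ≤ F x - G x) ∧
    (∀ x, F x - G x ≤ F τ - G τ) ∧
    F τ - G τ = (δ - β) * G τ * (1 - G τ) ∧
    0 < F τ - G τ := by
  have hFτ : F τ = δ * G τ := hF1 τ le_rfl
  have hβlt : β < 1 := by nlinarith
  have hδβ : 0 < δ - β := by linarith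
  refine ⟨hβlt, hδβ, ?_, ?_, ?_, ?_⟩
  · intro x
    rcases le_or_gt x τ with h | h
    · rw [hF1 x h]
      nlinarith [(hGrange x).1]
    · rw [hF2 x h]
      nlinarith [(hGrange x).2]
  · intro x
    rw [hFτ]
    rcases le_or_gt x τ with h | h
    · rw [hF1 x h]
      nlinarith [hGmono h, (hGrange x).1]
    · rw [hF2 x h]
      nlinarith [hGmono h.le]
  · rw [hFτ]; linear_combination G τ * hsum
  · rw [hFτ]; nlinarith
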